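/- arXiv:1604.05064 — 2 statements merged into one kernel-verified Lean document; each statement's English description precedes it below -/
import Mathlib

section
/- Let ρ > 0, q = (q₁, q₂) ∈ ℝ² with d := ‖q‖ ≥ 2ρ, L(θ) = √(d² − 2ρ(q₁ sin θ − q₂ cos θ)), φ(θ) = atan2(q₂ + ρ cos θ, q₁ − ρ sin θ) − arctan(ρ / L(θ)), and D(θ) = ρ(θ − φ(θ)) + L(θ). Then on any open interval of headings θ on which L(θ) > 0 and θ − φ(θ) ∈ (0, 2π), the function D is differentiable and D′(θ) = ρ(1 − cos(θ − φ(θ))). In particular 0 ≤ D′(θ) ≤ 2ρ on such an interval. -/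
/-- Four-quadrant arctangent: `atan2 y x` is the argument of the complex number `x + y i`. -/
noncomputable def atan2 (y x : ℝ) : ℝ := Complex.arg ⟨x, y⟩

/-- Tangent-segment length of the RS Dubins path from the origin with heading `θ`
to the target `q = (q₁, q₂)`: `L(θ) = √(‖q‖² − 2ρ(q₁ sin θ − q₂ cos θ))`. -/
noncomputable def Lrs (ρ q₁ q₂ θ : ℝ) : ℝ :=
  Real.sqrt (Real.sqrt (q₁ ^ 2 + q₂ ^ 2) ^ 2 - 2 * ρ * (q₁ * Real.sin θ - q₂ * Real.cos θ))

/-- Heading along the straight segment of the RS Dubins path: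
`φ(θ) = atan2(q₂ + ρ cos θ, q₁ − ρ sin θ) − arctan(ρ / L(θ))`. -/
noncomputable def φrs (ρ q₁ q₂ θ : ℝ) : ℝ :=
  atan2 (q₂ + ρ * Real.cos θ) (q₁ - ρ * Real.sin θ) - Real.arctan (ρ / Lrs ρ q₁ q₂ θ)

/-- Total RS Dubins path length `D(θ) = ρ(θ − φ(θ)) + L(θ)`. -/
noncomputable def Drs (ρ q₁ q₂ θ : ℝ) : ℝ :=
  ρ * (θ - φrs ρ q₁ q₂ θ) + Lrs ρ q₁ q₂ θ


/-!
Write `u, v` for the target's coordinates in the vehicle frame and `τ = θ - φ`. The heading `φ`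
is the angle of `q - c(θ)` minus `arctan (ρ / L)`, and `‖q - c(θ)‖² = L² + ρ²`, which gives
`(L² + ρ²) (cos τ, sin τ) = (L u - ρ (v - ρ), L (v - ρ) + ρ u)`: `cos τ` and `sin τ` are
differentiable in `θ`. Since `τ` stays in `(0, 2π)`, it is locally
`π - 2 arctan (sin τ / (1 - cos τ))`, hence differentiable with
`τ' = cos τ (sin τ)' - sin τ (cos τ)' = 1 - cos τ + u / L`. As `L' = -ρ u / L`,
`D' = ρ τ' + L' = ρ (1 - cos τ)`.
-/

open Real Filter Topology Set

theorem pi_sub_two_mul_arctan_sin_div_one_sub_cos {t : ℝ} (h0 : 0 < t) (h2π : t < 2 * π) :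
    π - 2 * arctan (sin t / (1 - cos t)) = t := by
  have hsin : 0 < sin (t / 2) := sin_pos_of_pos_of_lt_pi (by linarith) (by linarith)
  have hcot : sin t / (1 - cos t) = tan (π / 2 - t / 2) := by
    rw [tan_pi_div_two_sub, tan_eq_sin_div_cos, inv_div]
    conv_lhs => rw [show t = 2 * (t / 2) by ring, sin_two_mul, cos_two_mul, cos_sq']
    rw [show 1 - (2 * (1 - sin (t / 2) ^ 2) - 1) = 2 * sin (t / 2) ^ 2 by ring]
    field_simp
  rw [hcot, arctan_tan (by linarith) (by linarith)]
  ring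

theorem hasDerivAt_of_cos_sin {f c s : ℝ → ℝ} {c' s' x : ℝ} (hc : HasDerivAt c c' x)
    (hs : HasDerivAt s s' x)
    (hf : ∀ᶠ y in 𝓝 x, f y ∈ Ioo 0 (2 * π) ∧ cos (f y) = c y ∧ sin (f y) = s y) :
    HasDerivAt f (c x * s' - s x * c') x := by
  obtain ⟨⟨h0, h2π⟩, hcx, hsx⟩ := hf.self_of_nhds
  have hpyth : s x ^ 2 + c x ^ 2 = 1 := by rw [← hcx, ← hsx, sin_sq_add_cos_sq]
  have hc1 : 1 - c x ≠ 0 := by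
    rw [← hcx, sub_ne_zero]
    intro h
    have := (cos_eq_one_iff_of_lt_of_lt (by linarith [pi_pos]) (by linarith)).mp h.symm
    linarith
  -- `s ^ 2 + c ^ 2` is locally constant
  have horth : s x * s' + c x * c' = 0 := by
    have hconst : HasDerivAt (fun y => s y ^ 2 + c y ^ 2) 0 x :=
      (hasDerivAt_const x (1 : ℝ)).congr_of_eventuallyEq
        (hf.mono fun y ⟨_, hcy, hsy⟩ => by dsimp only; rw [← hcy, ← hsy, sin_sq_add_cos_sq])
    have := ((hs.pow 2).add (hc.pow 2)).unique hconst
    norm_num at this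
    linarith
  have hhalf : f =ᶠ[𝓝 x] fun y => π - 2 * arctan (s y / (1 - c y)) :=
    hf.mono fun y ⟨hy, hcy, hsy⟩ => by
      dsimp only
      rw [← hcy, ← hsy, pi_sub_two_mul_arctan_sin_div_one_sub_cos hy.1 hy.2]
  refine ((((hs.div (hc.const_sub 1) hc1).arctan.const_mul 2).const_sub π).congr_of_eventuallyEq
    hhalf).congr_deriv ?_
  simp only [Pi.div_apply]
  field_simp
  linear_combination (2 * s' - c x * s' + s x * c') * hpyth - 2 * s x * horth

theorem cos_atan2 {X Y : ℝ} (h : (X, Y) ≠ (0, 0)) :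
    cos (atan2 Y X) = X / √(X ^ 2 + Y ^ 2) := by
  have hz : (⟨X, Y⟩ : ℂ) ≠ 0 := fun hz => h (by simp [Complex.ext_iff] at hz; simp [hz])
  rw [atan2, Complex.cos_arg hz, Complex.norm_def, Complex.normSq_mk]
  ring_nf

theorem sin_atan2 (X Y : ℝ) : sin (atan2 Y X) = Y / √(X ^ 2 + Y ^ 2) := by
  rw [atan2, Complex.sin_arg, Complex.norm_def, Complex.normSq_mk]
  ring_nf

theorem cos_arctan_div {ℓ : ℝ} (hℓ : 0 < ℓ) (ρ : ℝ) :
    cos (arctan (ρ / ℓ)) = ℓ / √(ℓ ^ 2 + ρ ^ 2) := by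
  rw [cos_arctan, show 1 + (ρ / ℓ) ^ 2 = (ℓ ^ 2 + ρ ^ 2) / ℓ ^ 2 by field_simp,
    sqrt_div' _ (sq_nonneg ℓ), sqrt_sq hℓ.le, one_div_div]

theorem sin_arctan_div {ℓ : ℝ} (hℓ : 0 < ℓ) (ρ : ℝ) :
    sin (arctan (ρ / ℓ)) = ρ / √(ℓ ^ 2 + ρ ^ 2) := by
  rw [sin_arctan, show 1 + (ρ / ℓ) ^ 2 = (ℓ ^ 2 + ρ ^ 2) / ℓ ^ 2 by field_simp,
    sqrt_div' _ (sq_nonneg ℓ), sqrt_sq hℓ.le]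
  field_simp

theorem cos_atan2_sub_arctan_div {X Y ℓ ρ : ℝ} (hℓ : 0 < ℓ) (hXY : X ^ 2 + Y ^ 2 = ℓ ^ 2 + ρ ^ 2) :
    cos (atan2 Y X - arctan (ρ / ℓ)) = (X * ℓ + Y * ρ) / (ℓ ^ 2 + ρ ^ 2) := by
  have h : (X, Y) ≠ (0, 0) := by
    rintro ⟨⟩
    nlinarith
  rw [cos_sub, cos_atan2 h, sin_atan2, cos_arctan_div hℓ, sin_arctan_div hℓ, hXY]
  field_simp
  rw [sq_sqrt (by positivity)]

theorem sin_atan2_sub_arctan_div {X Y ℓ ρ : ℝ} (hℓ : 0 < ℓ) (hXY : X ^ 2 + Y ^ 2 = ℓ ^ 2 + ρ ^ 2) :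
    sin (atan2 Y X - arctan (ρ / ℓ)) = (Y * ℓ - X * ρ) / (ℓ ^ 2 + ρ ^ 2) := by
  have h : (X, Y) ≠ (0, 0) := by
    rintro ⟨⟩
    nlinarith
  rw [sin_sub, cos_atan2 h, sin_atan2, cos_arctan_div hℓ, sin_arctan_div hℓ, hXY]
  field_simp
  rw [sq_sqrt (by positivity)]

-- The target's coordinates in the frame of the vehicle at heading `θ`: forward, and to the right.
noncomputable def targetFwd (q₁ q₂ θ : ℝ) : ℝ := q₁ * cos θ + q₂ * sin θ

noncomputable def targetRight (q₁ q₂ θ : ℝ) : ℝ := q₁ * sin θ - q₂ * cos θ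

section RS

variable {ρ q₁ q₂ θ : ℝ}

theorem hasDerivAt_targetFwd (q₁ q₂ θ : ℝ) :
    HasDerivAt (targetFwd q₁ q₂) (-targetRight q₁ q₂ θ) θ :=
  (((hasDerivAt_cos θ).const_mul q₁).add ((hasDerivAt_sin θ).const_mul q₂)).congr_deriv
    (by rw [targetRight]; ring)

theorem hasDerivAt_targetRight (q₁ q₂ θ : ℝ) :
    HasDerivAt (targetRight q₁ q₂) (targetFwd q₁ q₂ θ) θ :=
  (((hasDerivAt_sin θ).const_mul q₁).sub ((hasDerivAt_cos θ).const_mul q₂)).congr_deriv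
    (by rw [targetFwd]; ring)

theorem Lrs_eq_sqrt (ρ q₁ q₂ θ : ℝ) :
    Lrs ρ q₁ q₂ θ = √(q₁ ^ 2 + q₂ ^ 2 - 2 * ρ * targetRight q₁ q₂ θ) := by
  rw [Lrs, sq_sqrt (by positivity), targetRight]

theorem Lrs_sq (hL : 0 < Lrs ρ q₁ q₂ θ) :
    Lrs ρ q₁ q₂ θ ^ 2 =
      targetFwd q₁ q₂ θ ^ 2 + targetRight q₁ q₂ θ ^ 2 - 2 * ρ * targetRight q₁ q₂ θ := by
  rw [Lrs_eq_sqrt] at hL ⊢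
  rw [sq_sqrt (sqrt_pos.mp hL).le, targetFwd, targetRight]
  linear_combination (-(q₁ ^ 2 + q₂ ^ 2)) * sin_sq_add_cos_sq θ

theorem hasDerivAt_Lrs (hL : 0 < Lrs ρ q₁ q₂ θ) :
    HasDerivAt (Lrs ρ q₁ q₂) (-(ρ * targetFwd q₁ q₂ θ) / Lrs ρ q₁ q₂ θ) θ := by
  rw [Lrs_eq_sqrt] at hL
  rw [funext (Lrs_eq_sqrt ρ q₁ q₂)]
  exact ((((hasDerivAt_targetRight q₁ q₂ θ).const_mul (2 * ρ)).const_sub _).sqrt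
    (sqrt_pos.mp hL).ne').congr_deriv (by field_simp)

/-- Pythagoras for the tangent from the target to the turning circle centred at
`(ρ sin θ, -ρ cos θ)`. -/
theorem sub_center_sq_eq_Lrs_sq_add_sq (hL : 0 < Lrs ρ q₁ q₂ θ) :
    (q₁ - ρ * sin θ) ^ 2 + (q₂ + ρ * cos θ) ^ 2 = Lrs ρ q₁ q₂ θ ^ 2 + ρ ^ 2 := by
  rw [Lrs_sq hL, targetFwd, targetRight]
  linear_combination (ρ ^ 2 - q₁ ^ 2 - q₂ ^ 2) * sin_sq_add_cos_sq θ

theorem cos_sub_φrs (hL : 0 < Lrs ρ q₁ q₂ θ) :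
    cos (θ - φrs ρ q₁ q₂ θ) =
      (Lrs ρ q₁ q₂ θ * targetFwd q₁ q₂ θ - ρ * (targetRight q₁ q₂ θ - ρ)) /
        (Lrs ρ q₁ q₂ θ ^ 2 + ρ ^ 2) := by
  have hXY := sub_center_sq_eq_Lrs_sq_add_sq hL
  rw [cos_sub, φrs, cos_atan2_sub_arctan_div hL hXY, sin_atan2_sub_arctan_div hL hXY,
    targetFwd, targetRight]
  field_simp
  linear_combination ρ ^ 2 * sin_sq_add_cos_sq θ

theorem sin_sub_φrs (hL : 0 < Lrs ρ q₁ q₂ θ) :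
    sin (θ - φrs ρ q₁ q₂ θ) =
      (Lrs ρ q₁ q₂ θ * (targetRight q₁ q₂ θ - ρ) + ρ * targetFwd q₁ q₂ θ) /
        (Lrs ρ q₁ q₂ θ ^ 2 + ρ ^ 2) := by
  have hXY := sub_center_sq_eq_Lrs_sq_add_sq hL
  rw [sin_sub, φrs, cos_atan2_sub_arctan_div hL hXY, sin_atan2_sub_arctan_div hL hXY,
    targetFwd, targetRight]
  field_simp
  linear_combination -(Lrs ρ q₁ q₂ θ * ρ) * sin_sq_add_cos_sq θ

theorem hasDerivAt_sub_φrs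
    (h : ∀ᶠ θ' in 𝓝 θ, 0 < Lrs ρ q₁ q₂ θ' ∧ θ' - φrs ρ q₁ q₂ θ' ∈ Ioo 0 (2 * π)) :
    HasDerivAt (fun θ => θ - φrs ρ q₁ q₂ θ)
      (1 - cos (θ - φrs ρ q₁ q₂ θ) + targetFwd q₁ q₂ θ / Lrs ρ q₁ q₂ θ) θ := by
  have hL : 0 < Lrs ρ q₁ q₂ θ := h.self_of_nhds.1
  have hL' := hasDerivAt_Lrs hL
  have hu := hasDerivAt_targetFwd q₁ q₂ θ
  have hv := hasDerivAt_targetRight q₁ q₂ θ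
  have hW := (hL'.pow 2).add_const (ρ ^ 2)
  have hW0 : Lrs ρ q₁ q₂ θ ^ 2 + ρ ^ 2 ≠ 0 := by positivity
  have hc := ((hL'.mul hu).sub ((hv.sub_const ρ).const_mul ρ)).div hW hW0
  have hs := ((hL'.mul (hv.sub_const ρ)).add (hu.const_mul ρ)).div hW hW0
  refine (hasDerivAt_of_cos_sin hc hs (h.mono fun θ' ⟨hL, hτ⟩ =>
    ⟨hτ, cos_sub_φrs hL, sin_sub_φrs hL⟩)).congr_deriv ?_
  rw [cos_sub_φrs hL]
  have hL2 := Lrs_sq hL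
  simp only [Pi.div_apply, Pi.mul_apply, Pi.sub_apply, Pi.add_apply, Pi.pow_apply,
    Nat.cast_ofNat, Nat.add_one_sub_one, pow_one]
  generalize Lrs ρ q₁ q₂ θ = ℓ at hL hL2 ⊢
  generalize targetFwd q₁ q₂ θ = u at hL2 ⊢
  generalize targetRight q₁ q₂ θ = v at hL2 ⊢
  field_simp
  linear_combination -(ℓ ^ 2 + ρ ^ 2) * (ρ ^ 2 * u + ℓ * (ℓ ^ 2 + ρ ^ 2)) * hL2

theorem hasDerivAt_Drs
    (h : ∀ᶠ θ' in 𝓝 θ, 0 < Lrs ρ q₁ q₂ θ' ∧ θ' - φrs ρ q₁ q₂ θ' ∈ Ioo 0 (2 * π)) :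
    HasDerivAt (Drs ρ q₁ q₂) (ρ * (1 - cos (θ - φrs ρ q₁ q₂ θ))) θ := by
  have hL : 0 < Lrs ρ q₁ q₂ θ := h.self_of_nhds.1
  exact (((hasDerivAt_sub_φrs h).const_mul ρ).add (hasDerivAt_Lrs hL)).congr_deriv
    (by field_simp; ring)

end RS

theorem stmt1_general (ρ q₁ q₂ a b : ℝ) (hρ : 0 < ρ)
    (hL : ∀ θ ∈ Set.Ioo a b, 0 < Lrs ρ q₁ q₂ θ)
    (hτ : ∀ θ ∈ Set.Ioo a b, θ - φrs ρ q₁ q₂ θ ∈ Set.Ioo 0 (2 * Real.pi)) :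
    ∀ θ ∈ Set.Ioo a b,
      HasDerivAt (Drs ρ q₁ q₂) (ρ * (1 - Real.cos (θ - φrs ρ q₁ q₂ θ))) θ
      ∧ 0 ≤ ρ * (1 - Real.cos (θ - φrs ρ q₁ q₂ θ))
      ∧ ρ * (1 - Real.cos (θ - φrs ρ q₁ q₂ θ)) ≤ 2 * ρ := by
  intro θ hθ
  have h : ∀ᶠ θ' in 𝓝 θ, 0 < Lrs ρ q₁ q₂ θ' ∧ θ' - φrs ρ q₁ q₂ θ' ∈ Ioo 0 (2 * π) :=
    eventually_of_mem (Ioo_mem_nhds hθ.1 hθ.2) fun θ' hθ' => ⟨hL θ' hθ', hτ θ' hθ'⟩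
  refine ⟨hasDerivAt_Drs h, mul_nonneg hρ.le (sub_nonneg.2 (cos_le_one _)), ?_⟩
  nlinarith [neg_one_le_cos (θ - φrs ρ q₁ q₂ θ)]

theorem stmt1 (ρ q₁ q₂ a b : ℝ) (hρ : 0 < ρ)
    (hd : 2 * ρ ≤ Real.sqrt (q₁ ^ 2 + q₂ ^ 2))
    (hL : ∀ θ ∈ Set.Ioo a b, 0 < Lrs ρ q₁ q₂ θ)
    (hτ : ∀ θ ∈ Set.Ioo a b, θ - φrs ρ q₁ q₂ θ ∈ Set.Ioo 0 (2 * Real.pi)) :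
    ∀ θ ∈ Set.Ioo a b,
      HasDerivAt (Drs ρ q₁ q₂) (ρ * (1 - Real.cos (θ - φrs ρ q₁ q₂ θ))) θ
      ∧ 0 ≤ ρ * (1 - Real.cos (θ - φrs ρ q₁ q₂ θ))
      ∧ ρ * (1 - Real.cos (θ - φrs ρ q₁ q₂ θ)) ≤ 2 * ρ :=
  stmt1_general ρ q₁ q₂ a b hρ hL hτ
end

section
/- Let ρ > 0, q = (q₁, q₂) ∈ ℝ² with d := ‖q‖ ≥ 2ρ, β the polar angle of q, L(θ) = √(d² − 2ρ(q₁ sin θ − q₂ cos θ)), φ(θ) = atan2(q₂ + ρ cos θ, q₁ − ρ sin θ) − arctan(ρ / L(θ)), and τ(θ) = θ − φ(θ). Then for every θ with L(θ) > 0 and τ(θ) ∈ [0, 2π), one has d · sin(β − φ(θ)) ≤ 2ρ, with equality if and only if τ(θ) = π. -/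
/-!
Write `c(θ) = (ρ sin θ, -ρ cos θ)` for the centre of the turning circle and `u(φ) = (cos φ, sin φ)`,
`n(φ) = (-sin φ, cos φ)`. Since `L` is the tangent length from `q` to that circle,
`‖q - c(θ)‖² = L² + ρ²`, and the definition of `φ` says precisely that
`q - c(θ) = L u(φ) + ρ n(φ)`. Taking the component along `n(φ)` gives
`d sin(β - φ) = ⟪q, n(φ)⟫ = ⟪c(θ), n(φ)⟫ + ρ = ρ (1 - cos(θ - φ))`,
which is at most `2ρ`, with equality exactly when `θ - φ = π` on `[0, 2π)`.
-/

open Real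

lemma cos_eq_neg_one_iff_of_mem_Ico {τ : ℝ} (hτ : τ ∈ Set.Ico 0 (2 * π)) :
    cos τ = -1 ↔ τ = π := by
  have hπ := pi_pos
  rw [← neg_eq_iff_eq_neg, ← cos_sub_pi,
    cos_eq_one_iff_of_lt_of_lt (by linarith [hτ.1]) (by linarith [hτ.2]), sub_eq_zero]

lemma mul_one_sub_cos_le_and_eq_iff {ρ τ : ℝ} (hρ : 0 < ρ) (hτ : τ ∈ Set.Ico 0 (2 * π)) :
    ρ * (1 - cos τ) ≤ 2 * ρ ∧ (ρ * (1 - cos τ) = 2 * ρ ↔ τ = π) := by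
  refine ⟨by nlinarith [neg_one_le_cos τ], ?_⟩
  rw [← cos_eq_neg_one_iff_of_mem_Ico hτ]
  constructor
  · intro h
    nlinarith
  · intro h
    rw [h]
    ring

lemma sqrt_one_add_div_sq {L : ℝ} (hL : 0 < L) (ρ : ℝ) :
    √(1 + (ρ / L) ^ 2) = √(L ^ 2 + ρ ^ 2) / L := by
  rw [← sqrt_sq hL.le, ← sqrt_div' _ (sq_nonneg L), sqrt_sq hL.le]
  congr 1
  field_simp

lemma sqrt_sq_add_sq_mul_cos_arctan_div {L : ℝ} (hL : 0 < L) (ρ : ℝ) :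
    √(L ^ 2 + ρ ^ 2) * cos (arctan (ρ / L)) = L := by
  have : 0 < √(L ^ 2 + ρ ^ 2) := sqrt_pos.2 (by positivity)
  rw [cos_arctan, sqrt_one_add_div_sq hL]
  field_simp

lemma sqrt_sq_add_sq_mul_sin_arctan_div {L : ℝ} (hL : 0 < L) (ρ : ℝ) :
    √(L ^ 2 + ρ ^ 2) * sin (arctan (ρ / L)) = ρ := by
  have : 0 < √(L ^ 2 + ρ ^ 2) := sqrt_pos.2 (by positivity)
  rw [sin_arctan, sqrt_one_add_div_sq hL]
  field_simp

lemma eq_mul_cos_sub_mul_sin_and_eq_mul_sin_add_mul_cos {A B L ρ φ : ℝ} (hL : 0 < L)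
    (h : A ^ 2 + B ^ 2 = L ^ 2 + ρ ^ 2) (hφ : φ = atan2 B A - arctan (ρ / L)) :
    A = L * cos φ - ρ * sin φ ∧ B = L * sin φ + ρ * cos φ := by
  have hnorm : ‖(⟨A, B⟩ : ℂ)‖ = √(L ^ 2 + ρ ^ 2) := by
    rw [Complex.norm_def, Complex.normSq_mk, ← h]
    ring_nf
  have harg : atan2 B A = φ + arctan (ρ / L) := by
    rw [hφ]
    ring
  have hA := Complex.norm_mul_cos_arg ⟨A, B⟩
  have hB := Complex.norm_mul_sin_arg ⟨A, B⟩
  rw [hnorm, ← atan2, harg] at hA hB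
  rw [cos_add] at hA
  rw [sin_add] at hB
  have hc := sqrt_sq_add_sq_mul_cos_arctan_div hL ρ
  have hs := sqrt_sq_add_sq_mul_sin_arctan_div hL ρ
  constructor
  · linear_combination -hA + cos φ * hc - sin φ * hs
  · linear_combination -hB + sin φ * hc + cos φ * hs

lemma sq_sub_add_sq_add_eq_sq_Lrs_add_sq {ρ q₁ q₂ θ : ℝ} (hL : 0 < Lrs ρ q₁ q₂ θ) :
    (q₁ - ρ * sin θ) ^ 2 + (q₂ + ρ * cos θ) ^ 2 = Lrs ρ q₁ q₂ θ ^ 2 + ρ ^ 2 := by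
  rw [Lrs, sq_sqrt (sqrt_pos.1 hL).le, sq_sqrt (by positivity)]
  linear_combination ρ ^ 2 * sin_sq_add_cos_sq θ

lemma mul_sin_sub_eq_mul_one_sub_cos_sub {q₁ q₂ d β ρ θ L φ : ℝ}
    (hq₁ : q₁ = d * cos β) (hq₂ : q₂ = d * sin β)
    (h₁ : q₁ - ρ * sin θ = L * cos φ - ρ * sin φ)
    (h₂ : q₂ + ρ * cos θ = L * sin φ + ρ * cos φ) :
    d * sin (β - φ) = ρ * (1 - cos (θ - φ)) := by
  rw [sin_sub, cos_sub]
  linear_combination cos φ * (h₂ - hq₂) - sin φ * (h₁ - hq₁) + ρ * sin_sq_add_cos_sq φ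

theorem stmt3_general (ρ q₁ q₂ β : ℝ) (hρ : 0 < ρ)
    (hβ₁ : q₁ = Real.sqrt (q₁ ^ 2 + q₂ ^ 2) * Real.cos β)
    (hβ₂ : q₂ = Real.sqrt (q₁ ^ 2 + q₂ ^ 2) * Real.sin β) :
    ∀ θ : ℝ, 0 < Lrs ρ q₁ q₂ θ → θ - φrs ρ q₁ q₂ θ ∈ Set.Ico 0 (2 * Real.pi) →
      Real.sqrt (q₁ ^ 2 + q₂ ^ 2) * Real.sin (β - φrs ρ q₁ q₂ θ) ≤ 2 * ρ
      ∧ (Real.sqrt (q₁ ^ 2 + q₂ ^ 2) * Real.sin (β - φrs ρ q₁ q₂ θ) = 2 * ρ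
          ↔ θ - φrs ρ q₁ q₂ θ = Real.pi) := by
  intro θ hL hτ
  obtain ⟨h₁, h₂⟩ := eq_mul_cos_sub_mul_sin_and_eq_mul_sin_add_mul_cos
    (φ := φrs ρ q₁ q₂ θ) hL (sq_sub_add_sq_add_eq_sq_Lrs_add_sq hL) rfl
  rw [mul_sin_sub_eq_mul_one_sub_cos_sub hβ₁ hβ₂ h₁ h₂]
  exact mul_one_sub_cos_le_and_eq_iff hρ hτ

theorem stmt3 (ρ q₁ q₂ β : ℝ) (hρ : 0 < ρ)
    (hd : 2 * ρ ≤ Real.sqrt (q₁ ^ 2 + q₂ ^ 2))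
    (hβ₁ : q₁ = Real.sqrt (q₁ ^ 2 + q₂ ^ 2) * Real.cos β)
    (hβ₂ : q₂ = Real.sqrt (q₁ ^ 2 + q₂ ^ 2) * Real.sin β) :
    ∀ θ : ℝ, 0 < Lrs ρ q₁ q₂ θ → θ - φrs ρ q₁ q₂ θ ∈ Set.Ico 0 (2 * Real.pi) →
      Real.sqrt (q₁ ^ 2 + q₂ ^ 2) * Real.sin (β - φrs ρ q₁ q₂ θ) ≤ 2 * ρ
      ∧ (Real.sqrt (q₁ ^ 2 + q₂ ^ 2) * Real.sin (β - φrs ρ q₁ q₂ θ) = 2 * ρ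
          ↔ θ - φrs ρ q₁ q₂ θ = Real.pi) :=
  stmt3_general ρ q₁ q₂ β hρ hβ₁ hβ₂
end
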